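/- Let Φ be an n×d matrix with unit-norm columns, y = Φx* with supp(x*) = s*, and let l be an index set of size k with k ≥ 1 and δ_k ≤ 1/2. Then for any j ∈ l, the residual denominator satisfies ‖Φ_{l[j]}^{⊥ l∖{j}}‖₂² ≥ 1 − δ_k²/(1 − δ_{k−1}), where Φ_i^{⊥ r} := (I − P{Φ_r})Φ_i. -/

import Mathlib

open Matrix Finset

noncomputable section

/-- Number of nonzero entries of a vector. -/
def sparsity {d : ℕ} (x : Fin d → ℝ) : ℕ :=
  (Finset.univ.filter fun i => x i ≠ 0).card

/-- Squared Euclidean norm. -/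
def nsq {k : Type*} [Fintype k] (v : k → ℝ) : ℝ := ∑ i, v i ^ 2

/-- Euclidean (ℓ₂) norm. -/
def l2 {k : Type*} [Fintype k] (v : k → ℝ) : ℝ := Real.sqrt (nsq v)

/-- `Φ` satisfies the order-`t` restricted isometry property with constant `δ`. -/
def satRIP {n d : ℕ} (Φ : Matrix (Fin n) (Fin d) ℝ) (t : ℕ) (δ : ℝ) : Prop :=
  ∀ x : Fin d → ℝ, sparsity x ≤ t →
    (1 - δ) * nsq x ≤ nsq (Φ.mulVec x) ∧ nsq (Φ.mulVec x) ≤ (1 + δ) * nsq x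

/-- The order-`t` RIP constant of `Φ` : the smallest `δ ≥ 0` satisfying the RIP bounds. -/
def ripConst {n d : ℕ} (Φ : Matrix (Fin n) (Fin d) ℝ) (t : ℕ) : ℝ :=
  sInf {δ : ℝ | 0 ≤ δ ∧ satRIP Φ t δ}

/-- The submatrix of `Φ` consisting of the columns indexed by `s`. -/
def cols {n d : ℕ} (Φ : Matrix (Fin n) (Fin d) ℝ) (s : Finset (Fin d)) :
    Matrix (Fin n) {i // i ∈ s} ℝ := Φ.submatrix id (fun i => (i : Fin d))

/-- Orthogonal projection `P{Φ_s} = Φ_s (Φ_sᵀ Φ_s)⁻¹ Φ_sᵀ` onto the column span of `Φ_s`. -/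
def proj {n d : ℕ} (Φ : Matrix (Fin n) (Fin d) ℝ) (s : Finset (Fin d)) :
    Matrix (Fin n) (Fin n) ℝ :=
  cols Φ s * ((cols Φ s)ᵀ * cols Φ s)⁻¹ * (cols Φ s)ᵀ

/-- Least-squares residual `v^{⊥s} = (I - P{Φ_s}) v`. -/
def residVec {n d : ℕ} (Φ : Matrix (Fin n) (Fin d) ℝ) (s : Finset (Fin d)) (y : Fin n → ℝ) :
    Fin n → ℝ := y - (proj Φ s).mulVec y

/-- The `i`-th column of `Φ`. -/
def col {n d : ℕ} (Φ : Matrix (Fin n) (Fin d) ℝ) (i : Fin d) : Fin n → ℝ := fun k => Φ k i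

/-- `x` is a least-squares estimate of `y` supported on `s`:
it is supported on `s` and minimizes `‖y - Φ z‖₂` over all `z` supported on `s`. -/
def leastSq {n d : ℕ} (Φ : Matrix (Fin n) (Fin d) ℝ) (y : Fin n → ℝ) (s : Finset (Fin d))
    (x : Fin d → ℝ) : Prop :=
  (∀ i, i ∉ s → x i = 0) ∧
  ∀ z : Fin d → ℝ, (∀ i, i ∉ s → z i = 0) → nsq (y - Φ.mulVec x) ≤ nsq (y - Φ.mulVec z)

/-- The support of a vector, as a `Finset`. -/
def spt {d : ℕ} (x : Fin d → ℝ) : Finset (Fin d) :=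
  Finset.univ.filter fun i => x i ≠ 0

/-! Write `A = Φ_{l∖{j}}`, `v = Φ_j`, `w = Aᵀ v` and `u = (AᵀA)⁻¹ w`, so that `P{A} v = A u` and
`‖v - P{A} v‖² = ‖v‖² - ‖A u‖²`. Polarizing the order-`k` RIP on the disjointly supported vectors
`e_j` and `w` gives `‖w‖² = ⟨Φ e_j, Φ w⟩ ≤ δ_k ‖w‖`, and the order-`(k-1)` lower RIP bound combined
with `‖A u‖² = ⟨w, u⟩ ≤ ‖w‖ ‖u‖` gives `(1 - δ_{k-1}) ‖A u‖² ≤ ‖w‖² ≤ δ_k²`. -/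

section nsq

variable {m : Type*} [Fintype m]

lemma nsq_nonneg (v : m → ℝ) : 0 ≤ nsq v :=
  Finset.sum_nonneg fun _ _ => sq_nonneg _

lemma nsq_eq_dotProduct (v : m → ℝ) : nsq v = v ⬝ᵥ v := by
  simp only [nsq, dotProduct, sq]

lemma nsq_add_smul (a b : m → ℝ) (s : ℝ) :
    nsq (a + s • b) = nsq a + 2 * s * (a ⬝ᵥ b) + s ^ 2 * nsq b := by
  simp only [nsq_eq_dotProduct, add_dotProduct, dotProduct_add, smul_dotProduct, dotProduct_smul,
    dotProduct_comm b a, smul_eq_mul]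
  ring

lemma nsq_sub (a b : m → ℝ) : nsq (a - b) = nsq a - 2 * (a ⬝ᵥ b) + nsq b := by
  simpa [sub_eq_add_neg] using nsq_add_smul a b (-1)

lemma sq_dotProduct_le_nsq_mul_nsq (a b : m → ℝ) : (a ⬝ᵥ b) ^ 2 ≤ nsq a * nsq b :=
  Finset.sum_mul_sq_le_sq_mul_sq univ a b

lemma nsq_mulVec_le {p : Type*} [Fintype p] (A : Matrix p m ℝ) (x : m → ℝ) :
    nsq (A *ᵥ x) ≤ (∑ i, ∑ j, A i j ^ 2) * nsq x := by
  rw [nsq, Finset.sum_mul]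
  exact Finset.sum_le_sum fun i _ => Finset.sum_mul_sq_le_sq_mul_sq univ (A i) x

end nsq

section leastSquares

variable {p m : Type*} [Fintype p] [Fintype m] (A : Matrix p m ℝ)

lemma dotProduct_transpose_mul_self_mulVec (z : m → ℝ) : z ⬝ᵥ (Aᵀ * A) *ᵥ z = nsq (A *ᵥ z) := by
  rw [← mulVec_mulVec, dotProduct_mulVec, ← mulVec_transpose, transpose_transpose,
    nsq_eq_dotProduct, dotProduct_comm]

variable [DecidableEq m]

def lsCoeffs (v : p → ℝ) : m → ℝ := (Aᵀ * A)⁻¹ *ᵥ (Aᵀ *ᵥ v)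

variable {A} {c : ℝ}

lemma isUnit_det_transpose_mul_self (hc : 0 < c) (hlow : ∀ z, c * nsq z ≤ nsq (A *ᵥ z)) :
    IsUnit (Aᵀ * A).det := by
  rw [← isUnit_iff_isUnit_det, ← mulVec_injective_iff_isUnit]
  intro x y hxy
  have hz : nsq (A *ᵥ (x - y)) = 0 := by
    rw [← dotProduct_transpose_mul_self_mulVec, mulVec_sub, hxy, sub_self, dotProduct_zero]
  have : nsq (x - y) = 0 := by nlinarith [hlow (x - y), nsq_nonneg (x - y)]
  rwa [nsq_eq_dotProduct, dotProduct_self_eq_zero, sub_eq_zero] at this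

lemma transpose_mul_self_mulVec_lsCoeffs (hc : 0 < c) (hlow : ∀ z, c * nsq z ≤ nsq (A *ᵥ z))
    (v : p → ℝ) : (Aᵀ * A) *ᵥ lsCoeffs A v = Aᵀ *ᵥ v := by
  rw [lsCoeffs, mulVec_mulVec, mul_nonsing_inv _ (isUnit_det_transpose_mul_self hc hlow),
    one_mulVec]

lemma nsq_sub_mulVec_lsCoeffs (hc : 0 < c) (hlow : ∀ z, c * nsq z ≤ nsq (A *ᵥ z)) (v : p → ℝ) :
    nsq (v - A *ᵥ lsCoeffs A v) = nsq v - nsq (A *ᵥ lsCoeffs A v) := by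
  have hv : v ⬝ᵥ A *ᵥ lsCoeffs A v = nsq (A *ᵥ lsCoeffs A v) := by
    rw [dotProduct_mulVec, ← mulVec_transpose, ← transpose_mul_self_mulVec_lsCoeffs hc hlow,
      dotProduct_comm, dotProduct_transpose_mul_self_mulVec]
  rw [nsq_sub, hv]
  ring

lemma mul_nsq_mulVec_lsCoeffs_le (hc : 0 < c) (hlow : ∀ z, c * nsq z ≤ nsq (A *ᵥ z))
    (v : p → ℝ) : c * nsq (A *ᵥ lsCoeffs A v) ≤ nsq (Aᵀ *ᵥ v) := by
  set u := lsCoeffs A v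
  have hq : nsq (A *ᵥ u) = u ⬝ᵥ Aᵀ *ᵥ v := by
    rw [← transpose_mul_self_mulVec_lsCoeffs hc hlow, dotProduct_transpose_mul_self_mulVec]
  have hCS := sq_dotProduct_le_nsq_mul_nsq u (Aᵀ *ᵥ v)
  rw [← hq] at hCS
  have hu := hlow u
  rcases (nsq_nonneg (A *ᵥ u)).eq_or_lt with h0 | hpos
  · rw [← h0, mul_zero]
    exact nsq_nonneg _
  · nlinarith [nsq_nonneg (Aᵀ *ᵥ v)]

end leastSquares

lemma residVec_eq_sub_mulVec_lsCoeffs {n d : ℕ} (Φ : Matrix (Fin n) (Fin d) ℝ)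
    (s : Finset (Fin d)) (v : Fin n → ℝ) :
    residVec Φ s v = v - cols Φ s *ᵥ lsCoeffs (cols Φ s) v := by
  rw [residVec, proj, lsCoeffs, mulVec_mulVec, mulVec_mulVec]

section support

variable {d : ℕ}

lemma dotProduct_eq_zero_of_disjoint_spt {x y : Fin d → ℝ} (h : Disjoint (spt x) (spt y)) :
    x ⬝ᵥ y = 0 := by
  refine Finset.sum_eq_zero fun i _ => ?_
  by_contra hxy
  obtain ⟨hx, hy⟩ := mul_ne_zero_iff.1 hxy
  exact Finset.disjoint_left.mp h (show i ∈ spt x by simpa [spt] using hx) (by simpa [spt] using hy)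

lemma spt_add_smul_subset (x y : Fin d → ℝ) (s : ℝ) : spt (x + s • y) ⊆ spt x ∪ spt y := by
  intro i hi
  by_contra h
  simp_all [spt]

lemma spt_single_subset (j : Fin d) (a : ℝ) : spt (Pi.single j a) ⊆ {j} := by
  intro i hi
  by_contra h
  simp_all [spt, Pi.single_apply]

def extendByZero (s : Finset (Fin d)) (u : s → ℝ) : Fin d → ℝ :=
  fun i => if h : i ∈ s then u ⟨i, h⟩ else 0

lemma spt_extendByZero_subset (s : Finset (Fin d)) (u : s → ℝ) : spt (extendByZero s u) ⊆ s := by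
  intro i hi
  by_contra h
  simp_all [spt, extendByZero]

lemma sum_extendByZero (s : Finset (Fin d)) (u : s → ℝ) (g : Fin d → ℝ → ℝ)
    (hg : ∀ i, g i 0 = 0) : ∑ i, g i (extendByZero s u i) = ∑ i : s, g i (u i) := by
  rw [← Finset.sum_subset (Finset.subset_univ s) fun i _ hi => by simp [extendByZero, hi, hg],
    ← Finset.sum_coe_sort]
  exact Finset.sum_congr rfl fun i _ => by simp [extendByZero]

lemma nsq_extendByZero (s : Finset (Fin d)) (u : s → ℝ) : nsq (extendByZero s u) = nsq u :=
  sum_extendByZero s u (fun _ a => a ^ 2) fun _ => zero_pow two_ne_zero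

lemma mulVec_extendByZero {n : ℕ} (Φ : Matrix (Fin n) (Fin d) ℝ) (s : Finset (Fin d))
    (u : s → ℝ) : Φ *ᵥ extendByZero s u = cols Φ s *ᵥ u :=
  funext fun i => sum_extendByZero s u (fun j a => Φ i j * a) fun _ => mul_zero _

end support

section RIP

variable {n d : ℕ} (Φ : Matrix (Fin n) (Fin d) ℝ)

lemma exists_satRIP (t : ℕ) : ∃ δ, 0 ≤ δ ∧ satRIP Φ t δ := by
  set C := ∑ i, ∑ j, Φ i j ^ 2
  have hC : 0 ≤ C := by positivity
  refine ⟨C + 1, by positivity, fun x _ => ⟨?_, ?_⟩⟩ <;>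
    nlinarith [nsq_mulVec_le Φ x, nsq_nonneg x, nsq_nonneg (Φ *ᵥ x)]

lemma isClosed_setOf_satRIP (t : ℕ) : IsClosed {δ | 0 ≤ δ ∧ satRIP Φ t δ} := by
  simp only [satRIP, Set.ofPred_and, Set.ofPred_forall]
  refine (isClosed_le continuous_const continuous_id).inter
    (isClosed_iInter fun x => isClosed_iInter fun _ => ?_)
  exact (isClosed_le (by fun_prop) continuous_const).inter
    (isClosed_le continuous_const (by fun_prop))

lemma ripConst_mem (t : ℕ) : ripConst Φ t ∈ {δ | 0 ≤ δ ∧ satRIP Φ t δ} :=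
  (isClosed_setOf_satRIP Φ t).csInf_mem (exists_satRIP Φ t) ⟨0, fun _ h => h.1⟩

lemma ripConst_mono {t t' : ℕ} (h : t' ≤ t) : ripConst Φ t' ≤ ripConst Φ t :=
  csInf_le_csInf ⟨0, fun _ h => h.1⟩ (exists_satRIP Φ t)
    fun _ hδ => ⟨hδ.1, fun x hx => hδ.2 x (hx.trans h)⟩

variable {Φ} {t : ℕ} {δ : ℝ}

lemma mul_nsq_le_nsq_cols_mulVec {s : Finset (Fin d)} (h : satRIP Φ s.card δ) (z : s → ℝ) :
    (1 - δ) * nsq z ≤ nsq (cols Φ s *ᵥ z) := by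
  have := (h (extendByZero s z) (Finset.card_le_card (spt_extendByZero_subset s z))).1
  rwa [mulVec_extendByZero, nsq_extendByZero] at this

lemma sq_dotProduct_mulVec_le_of_satRIP (h : satRIP Φ t δ) {x y : Fin d → ℝ}
    (hxy : Disjoint (spt x) (spt y)) (hcard : (spt x ∪ spt y).card ≤ t) :
    (Φ *ᵥ x ⬝ᵥ Φ *ᵥ y) ^ 2 ≤ δ ^ 2 * nsq x * nsq y := by
  have hRIP (s : ℝ) :=
    h (x + s • y) ((Finset.card_le_card (spt_add_smul_subset x y s)).trans hcard)
  have hpolar : ∀ s : ℝ, 2 * s * (Φ *ᵥ x ⬝ᵥ Φ *ᵥ y) ≤ δ * (nsq x + s ^ 2 * nsq y) := by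
    intro s
    have hplus := (hRIP s).2
    have hminus := (hRIP (-s)).1
    simp only [mulVec_add, mulVec_smul, nsq_add_smul,
      dotProduct_eq_zero_of_disjoint_spt hxy] at hplus hminus
    nlinarith
  have := discrim_le_zero (a := δ * nsq y) (b := -2 * (Φ *ᵥ x ⬝ᵥ Φ *ᵥ y)) (c := δ * nsq x)
    fun s => by nlinarith [hpolar s]
  rw [discrim] at this
  nlinarith

lemma nsq_cols_transpose_mulVec_col_le {r : Finset (Fin d)} {j : Fin d} (hj : j ∉ r)
    (h : satRIP Φ (r.card + 1) δ) : nsq ((cols Φ r)ᵀ *ᵥ _root_.col Φ j) ≤ δ ^ 2 := by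
  set w := (cols Φ r)ᵀ *ᵥ _root_.col Φ j
  have hspt_single := spt_single_subset j (1 : ℝ)
  have hspt_w := spt_extendByZero_subset r w
  have hdisj : Disjoint (spt (Pi.single j 1)) (spt (extendByZero r w)) :=
    Finset.disjoint_of_subset_left hspt_single
      (Finset.disjoint_of_subset_right hspt_w (Finset.disjoint_singleton_left.2 hj))
  have hcard : (spt (Pi.single j 1) ∪ spt (extendByZero r w)).card ≤ r.card + 1 :=
    (Finset.card_le_card (Finset.union_subset_union hspt_single hspt_w)).trans
      ((Finset.card_union_le _ _).trans (by rw [Finset.card_singleton, add_comm]))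
  have hdot : Φ *ᵥ Pi.single j 1 ⬝ᵥ Φ *ᵥ extendByZero r w = nsq w := by
    rw [mulVec_single_one, mulVec_extendByZero, dotProduct_mulVec, ← mulVec_transpose,
      nsq_eq_dotProduct]
    rfl
  have hsingle : nsq (Pi.single j (1 : ℝ)) = 1 := by
    simp [nsq, Pi.single_apply]
  have key := sq_dotProduct_mulVec_le_of_satRIP h hdisj hcard
  rw [hdot, hsingle, nsq_extendByZero, mul_one] at key
  rcases (nsq_nonneg w).eq_or_lt with h0 | hpos
  · rw [← h0]
    positivity
  · nlinarith

end RIP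

theorem stmt8_general {n d : ℕ} (Φ : Matrix (Fin n) (Fin d) ℝ)
    (hunit : ∀ j, nsq (_root_.col Φ j) = 1)
    (l : Finset (Fin d)) (k : ℕ) (hk : l.card = k)
    (hδ : ripConst Φ k ≤ 1 / 2)
    (j : Fin d) (hj : j ∈ l) :
    1 - ripConst Φ k ^ 2 / (1 - ripConst Φ (k - 1)) ≤
      nsq (residVec Φ (l.erase j) (_root_.col Φ j)) := by
  set r := l.erase j
  obtain rfl : r.card + 1 = k := by rw [Finset.card_erase_add_one hj, hk]
  rw [Nat.add_sub_cancel]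
  have hgap : 0 < 1 - ripConst Φ r.card := by
    linarith [ripConst_mono Φ (Nat.le_succ r.card)]
  have hlow := mul_nsq_le_nsq_cols_mulVec (ripConst_mem Φ r.card).2
  have hw := nsq_cols_transpose_mulVec_col_le (Finset.notMem_erase j l) (ripConst_mem Φ _).2
  have hq := mul_nsq_mulVec_lsCoeffs_le hgap hlow (_root_.col Φ j)
  rw [residVec_eq_sub_mulVec_lsCoeffs, nsq_sub_mulVec_lsCoeffs hgap hlow, hunit,
    sub_le_sub_iff_left, le_div_iff₀ hgap, mul_comm]
  exact hq.trans hw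

/-- with unit-norm columns, `|l| = k ≥ 1` and `δ_k ≤ 1/2`, for any
`j ∈ l` the residual denominator satisfies
`‖Φ_j^{⊥ l∖{j}}‖₂² ≥ 1 − δ_k²/(1 − δ_{k−1})`. -/
theorem stmt8 {n d : ℕ} (Φ : Matrix (Fin n) (Fin d) ℝ)
    (hunit : ∀ j, nsq (_root_.col Φ j) = 1)
    (xs : Fin d → ℝ)
    (l : Finset (Fin d)) (k : ℕ) (hk : l.card = k) (hk1 : 1 ≤ k)
    (hδ : ripConst Φ k ≤ 1 / 2)
    (j : Fin d) (hj : j ∈ l) :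
    1 - ripConst Φ k ^ 2 / (1 - ripConst Φ (k - 1)) ≤
      nsq (residVec Φ (l.erase j) (_root_.col Φ j)) :=
  stmt8_general Φ hunit l k hk hδ j hj
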